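/- If u : ℝ^d → ℝ satisfies u ∈ L²(ℝ^d, m(dx)) and Ê(u,u) < ∞ (i.e. u ∈ ℱ), then both u·1_{D^c} and u·1_D also belong to ℱ; moreover Ê(u 1_{D^c}, u 1_{D^c}) = ∫_{D^c} u(x)² μ(x) dx. -/

import Mathlib

open MeasureTheory Set
open scoped ENNReal

noncomputable section

abbrev Euc (d : ℕ) := EuclideanSpace ℝ (Fin d)

/-- `μ(x) = ∫_D k(x,y) dy` as an `ℝ≥0∞`-valued density. -/
def muDens (d : ℕ) (D : Set (Euc d)) (k : Euc d → Euc d → ℝ) (x : Euc d) : ℝ≥0∞ :=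
  ∫⁻ y in D, ENNReal.ofReal (k x y)

/-- The measure `m(dx) = 1_D(x) dx + 1_{Dᶜ}(x) μ(x) dx`. -/
def mMeas (d : ℕ) (D : Set (Euc d)) (k : Euc d → Euc d → ℝ) : Measure (Euc d) :=
  volume.restrict D + (volume.restrict Dᶜ).withDensity (muDens d D k)

/-- The energy `Ê(u,u) = (1/2)∬_{(ℝ^d×ℝ^d)∖(Dᶜ×Dᶜ)} (u(x)-u(y))² k(x,y) dy dx`. -/
def hatE (d : ℕ) (D : Set (Euc d)) (k : Euc d → Euc d → ℝ) (u : Euc d → ℝ) : ℝ≥0∞ :=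
  (1 / 2 : ℝ≥0∞) * ∫⁻ p in ((univ : Set (Euc d × Euc d)) \ (Dᶜ ×ˢ Dᶜ)),
    ENNReal.ofReal ((u p.1 - u p.2) ^ 2 * k p.1 p.2)

/-- Membership in `ℱ = {u ∈ L²(ℝ^d, m) : Ê(u,u) < ∞}`. -/
def memF (d : ℕ) (D : Set (Euc d)) (k : Euc d → Euc d → ℝ) (u : Euc d → ℝ) : Prop :=
  MemLp u 2 (mMeas d D k) ∧ hatE d D k u < ⊤


/-!
The energy of `u 1_{Dᶜ}` only sees the pairs with exactly one point in `D`. The integrand is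
symmetric, so both mixed blocks `D × Dᶜ` and `Dᶜ × D` contribute the same amount, which cancels
the factor `1/2`, and Tonelli on `Dᶜ × D` turns what is left into `∫_{Dᶜ} u² μ`. That integral is
bounded by `‖u‖²_{L²(m)}`, and `u 1_D = u - u 1_{Dᶜ}` has finite energy because
`(a - b)² ≤ 2a² + 2b²`.
-/

open Function

theorem ENNReal.ofReal_sub_sq_mul_le (a b c : ℝ) :
    ENNReal.ofReal ((a - b) ^ 2 * c) ≤
      2 * ENNReal.ofReal (a ^ 2 * c) + 2 * ENNReal.ofReal (b ^ 2 * c) := by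
  rcases le_or_gt c 0 with hc | hc
  · rw [ENNReal.ofReal_of_nonpos (mul_nonpos_of_nonneg_of_nonpos (sq_nonneg _) hc)]
    exact zero_le
  · have hsq : (a - b) ^ 2 ≤ 2 * a ^ 2 + 2 * b ^ 2 := by nlinarith [sq_nonneg (a + b)]
    calc ENNReal.ofReal ((a - b) ^ 2 * c)
        ≤ ENNReal.ofReal (2 * (a ^ 2 * c) + 2 * (b ^ 2 * c)) :=
          ENNReal.ofReal_le_ofReal (by nlinarith)
      _ = 2 * ENNReal.ofReal (a ^ 2 * c) + 2 * ENNReal.ofReal (b ^ 2 * c) := by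
          rw [ENNReal.ofReal_add (by positivity) (by positivity), ENNReal.ofReal_mul zero_le_two,
            ENNReal.ofReal_mul zero_le_two, ENNReal.ofReal_ofNat]

section ProductIntegrals

variable {α : Type*} [MeasureSpace α] [SFinite (volume : Measure α)]

theorem setLIntegral_prod_comm {F : α × α → ℝ≥0∞} (hF : ∀ p, F p.swap = F p) (A B : Set α) :
    ∫⁻ p in A ×ˢ B, F p = ∫⁻ p in B ×ˢ A, F p := by
  simp only [Measure.volume_eq_prod, ← Measure.prod_restrict]
  rw [← lintegral_prod_swap]
  simp only [hF]

theorem setLIntegral_prod_sq_mul {u : α → ℝ} {k : α → α → ℝ} (hu : Measurable u)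
    (hk : Measurable (uncurry k)) (A B : Set α) :
    ∫⁻ p in A ×ˢ B, ENNReal.ofReal (u p.1 ^ 2 * k p.1 p.2) =
      ∫⁻ x in A, ENNReal.ofReal (u x ^ 2) * ∫⁻ y in B, ENNReal.ofReal (k x y) := by
  have hk' : Measurable fun p : α × α => k p.1 p.2 := hk
  rw [Measure.volume_eq_prod, ← Measure.prod_restrict, lintegral_prod _ (by fun_prop)]
  refine lintegral_congr fun x => ?_
  simp only [ENNReal.ofReal_mul (sq_nonneg (u x))]
  exact lintegral_const_mul _ (by fun_prop)

end ProductIntegrals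

variable {d : ℕ} {D : Set (Euc d)} {k : Euc d → Euc d → ℝ}

theorem measurable_muDens (hk : Measurable (uncurry k)) : Measurable (muDens d D k) :=
  hk.ennreal_ofReal.lintegral_prod_right

theorem hatE_sub_le (hk : Measurable (uncurry k)) {f : Euc d → ℝ} (hf : Measurable f)
    (g : Euc d → ℝ) : hatE d D k (f - g) ≤ 2 * hatE d D k f + 2 * hatE d D k g := by
  have hk' : Measurable fun p : Euc d × Euc d => k p.1 p.2 := hk
  simp only [hatE]
  set S : Set (Euc d × Euc d) := univ \ (Dᶜ ×ˢ Dᶜ)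
  have hint : ∫⁻ p in S, ENNReal.ofReal (((f - g) p.1 - (f - g) p.2) ^ 2 * k p.1 p.2) ≤
      2 * (∫⁻ p in S, ENNReal.ofReal ((f p.1 - f p.2) ^ 2 * k p.1 p.2)) +
        2 * ∫⁻ p in S, ENNReal.ofReal ((g p.1 - g p.2) ^ 2 * k p.1 p.2) := by
    rw [← lintegral_const_mul' _ _ ENNReal.ofNat_ne_top,
      ← lintegral_const_mul' _ _ ENNReal.ofNat_ne_top, ← lintegral_add_left (by fun_prop)]
    refine lintegral_mono fun p => ?_
    convert ENNReal.ofReal_sub_sq_mul_le (f p.1 - f p.2) (g p.1 - g p.2) (k p.1 p.2) using 3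
    simp only [Pi.sub_apply]
    ring
  calc _ ≤ 1 / 2 * (2 * (∫⁻ p in S, ENNReal.ofReal ((f p.1 - f p.2) ^ 2 * k p.1 p.2)) +
        2 * ∫⁻ p in S, ENNReal.ofReal ((g p.1 - g p.2) ^ 2 * k p.1 p.2)) := by gcongr
    _ = _ := by ring

theorem hatE_indicator_compl (hD : MeasurableSet D) (hk : Measurable (uncurry k))
    (hk_symm : ∀ x y, k x y = k y x) {u : Euc d → ℝ} (hu : Measurable u) :
    hatE d D k (Dᶜ.indicator u) = ∫⁻ x in Dᶜ, ENNReal.ofReal (u x ^ 2) * muDens d D k x := by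
  set v := Dᶜ.indicator u
  set F : Euc d × Euc d → ℝ≥0∞ := fun p => ENNReal.ofReal ((v p.1 - v p.2) ^ 2 * k p.1 p.2)
  have hsplit : (univ : Set (Euc d × Euc d)) \ (Dᶜ ×ˢ Dᶜ) = D ×ˢ D ∪ D ×ˢ Dᶜ ∪ Dᶜ ×ˢ D := by
    ext ⟨x, y⟩
    by_cases hx : x ∈ D <;> by_cases hy : y ∈ D <;> simp [hx, hy]
  have hDD : ∫⁻ p in D ×ˢ D, F p = 0 := by
    refine setLIntegral_eq_zero (hD.prod hD) fun p hp => ?_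
    simp [F, v, hp.1, hp.2]
  have hDcD : ∫⁻ p in Dᶜ ×ˢ D, F p = ∫⁻ p in Dᶜ ×ˢ D, ENNReal.ofReal (u p.1 ^ 2 * k p.1 p.2) := by
    refine setLIntegral_congr_fun (hD.compl.prod hD) fun p hp => ?_
    simp [F, v, hp.1, hp.2]
  have hF_swap : ∀ p : Euc d × Euc d, F p.swap = F p := fun p => by
    simp only [F, Prod.fst_swap, Prod.snd_swap, hk_symm p.2 p.1, sub_sq_comm (v p.2)]
  rw [hatE, hsplit,
    lintegral_union (hD.compl.prod hD) (Disjoint.union_left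
      (disjoint_prod.2 (.inl disjoint_compl_right)) (disjoint_prod.2 (.inl disjoint_compl_right))),
    lintegral_union (hD.prod hD.compl) (disjoint_prod.2 (.inr disjoint_compl_right)),
    hDD, zero_add, setLIntegral_prod_comm hF_swap D Dᶜ, ← two_mul, ← mul_assoc,
    one_div, ENNReal.inv_mul_cancel two_ne_zero ENNReal.ofNat_ne_top, one_mul, hDcD,
    setLIntegral_prod_sq_mul hu hk]
  rfl

theorem setLIntegral_compl_sq_mul_muDens_lt_top (hk : Measurable (uncurry k)) {u : Euc d → ℝ}
    (hu : MemLp u 2 (mMeas d D k)) :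
    ∫⁻ x in Dᶜ, ENNReal.ofReal (u x ^ 2) * muDens d D k x < ⊤ := by
  have hle : (volume.restrict Dᶜ).withDensity (muDens d D k) ≤ mMeas d D k :=
    Measure.le_add_left le_rfl
  have hu2 : AEMeasurable (fun x => ENNReal.ofReal (u x ^ 2)) (mMeas d D k) :=
    (hu.1.aemeasurable.pow_const 2).ennreal_ofReal
  calc ∫⁻ x in Dᶜ, ENNReal.ofReal (u x ^ 2) * muDens d D k x
      = ∫⁻ x, ENNReal.ofReal (u x ^ 2) ∂(volume.restrict Dᶜ).withDensity (muDens d D k) := by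
        rw [lintegral_withDensity_eq_lintegral_mul₀' (measurable_muDens hk).aemeasurable
          (hu2.mono_measure hle)]
        simp only [Pi.mul_apply, mul_comm]
    _ ≤ ∫⁻ x, ENNReal.ofReal (u x ^ 2) ∂mMeas d D k := lintegral_mono' hle le_rfl
    _ < ⊤ := hu.integrable_sq.lintegral_lt_top

theorem statement3 (d : ℕ)
    (D : Set (Euc d)) (hDopen : IsOpen D)
    (j : ℝ → ℝ) (hjmeas : Measurable j)
    (k : Euc d → Euc d → ℝ) (hk : ∀ x y, k x y = j (dist x y))
    (u : Euc d → ℝ) (humeas : Measurable u) (hu : memF d D k u) :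
    memF d D k (Dᶜ.indicator u) ∧ memF d D k (D.indicator u) ∧
      hatE d D k (Dᶜ.indicator u) =
        ∫⁻ x in Dᶜ, ENNReal.ofReal (u x ^ 2) * muDens d D k x := by
  have hD : MeasurableSet D := hDopen.measurableSet
  have hk_meas : Measurable (uncurry k) := by
    rw [show uncurry k = fun p => j (dist p.1 p.2) from funext fun p => hk p.1 p.2]
    fun_prop
  have hk_symm : ∀ x y, k x y = k y x := fun x y => by rw [hk, hk, dist_comm]
  have hE := hatE_indicator_compl hD hk_meas hk_symm humeas
  have hE_fin : hatE d D k (Dᶜ.indicator u) < ⊤ :=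
    hE ▸ setLIntegral_compl_sq_mul_muDens_lt_top hk_meas hu.1
  refine ⟨⟨hu.1.indicator hD.compl, hE_fin⟩, ⟨hu.1.indicator hD, ?_⟩, hE⟩
  rw [← compl_compl D, Set.indicator_compl, compl_compl]
  refine (hatE_sub_le hk_meas humeas _).trans_lt ?_
  exact ENNReal.add_lt_top.2 ⟨ENNReal.mul_lt_top (by simp) hu.2, ENNReal.mul_lt_top (by simp) hE_fin⟩
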